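/- (Expansion bound for the symmetry preserving algorithm) Let Z be a subset of the nondecreasing ω-tuples from {1,...,n}, where ω = s+t+v. Then |Z| ≤ min( (C(ω,t)·d_A)^{ω/(s+v)}, (C(ω,s)·d_B)^{ω/(v+t)}, (C(ω,v)·d_C)^{ω/(s+t)} ), where d_A, d_B, d_C are respectively the ranks of the restricted encoding matrices, which satisfy d_A ≥ |L_A|/C(ω,t) with L_A the set of nondecreasing (s+v)-subtuples of elements of Z (and analogously for d_B, d_C). Consequently |Z| ≤ |L_A|^{ω/(s+v)} where L_A is the set of all nondecreasing (s+v)-subsequences of elements of Z. -/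

import Mathlib

/-! The bound is the uniform-cover case of Shearer's inequality: if every `k`-subsequence of every
tuple in `Z ⊆ αᵐ` lies in `B`, then `|Z|ᵏ ≤ |B|ᵐ`. This follows by induction on `m` from the
discrete Loomis–Whitney inequality `|Z|ᵐ⁻¹ ≤ ∏ⱼ |πⱼ Z|`, where `πⱼ` forgets coordinate `j`, since
every `k`-subsequence of a tuple in `πⱼ Z` is one of a tuple in `Z`. Loomis–Whitney in turn
follows by induction on the dimension: slice `Z` along its last coordinate, bound each slice by
the induction hypothesis, and recombine the slices with Hölder's inequality for `m - 1` functions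
with exponents `1 / (m - 1)`. -/

open Finset MeasureTheory
open scoped ENNReal

theorem ENNReal.sum_prod_rpow_le_prod_sum_rpow {ι κ : Type*} (s : Finset ι) (A : Finset κ)
    (f : ι → κ → ℝ≥0∞) {p : ι → ℝ} (hp : ∑ i ∈ s, p i = 1) (hp₀ : ∀ i ∈ s, 0 ≤ p i) :
    ∑ a ∈ A, ∏ i ∈ s, f i a ^ p i ≤ ∏ i ∈ s, (∑ a ∈ A, f i a) ^ p i := by
  let _ : MeasurableSpace κ := ⊤
  simpa [lintegral_finset, Measure.count_singleton] using
    ENNReal.lintegral_prod_norm_pow_le (μ := Measure.count.restrict (A : Set κ)) s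
      (fun i _ => measurable_from_top.aemeasurable) hp hp₀

namespace Finset

theorem sum_pow_le_mul_prod_sum {ι κ : Type*} [Fintype ι] [Nonempty ι] (A : Finset κ)
    (x : κ → ℕ) (w : ℕ) (y : ι → κ → ℕ)
    (h : ∀ a ∈ A, x a ^ Fintype.card ι ≤ w * ∏ i, y i a) :
    (∑ a ∈ A, x a) ^ Fintype.card ι ≤ w * ∏ i, ∑ a ∈ A, y i a := by
  set n := Fintype.card ι
  have hn : (0 : ℝ) < n := by exact_mod_cast Fintype.card_pos
  have hr : (0 : ℝ) ≤ (n : ℝ)⁻¹ := by positivity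
  have root {X C : ℕ} : X ^ n ≤ C ↔ (X : ℝ≥0∞) ≤ (C : ℝ≥0∞) ^ (n : ℝ)⁻¹ := by
    rw [ENNReal.le_rpow_inv_iff hn, ENNReal.rpow_natCast, ← Nat.cast_pow, Nat.cast_le]
  rw [root]
  push_cast
  calc ∑ a ∈ A, (x a : ℝ≥0∞)
      ≤ ∑ a ∈ A, ((w : ℝ≥0∞) * ∏ i, (y i a : ℝ≥0∞)) ^ (n : ℝ)⁻¹ := by
        gcongr with a ha
        exact_mod_cast root.1 (h a ha)
    _ = (w : ℝ≥0∞) ^ (n : ℝ)⁻¹ * ∑ a ∈ A, ∏ i, (y i a : ℝ≥0∞) ^ (n : ℝ)⁻¹ := by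
        simp only [ENNReal.mul_rpow_of_nonneg _ _ hr, ENNReal.prod_rpow_of_nonneg hr, mul_sum]
    _ ≤ (w : ℝ≥0∞) ^ (n : ℝ)⁻¹ * ∏ i, (∑ a ∈ A, (y i a : ℝ≥0∞)) ^ (n : ℝ)⁻¹ := by
        gcongr
        refine ENNReal.sum_prod_rpow_le_prod_sum_rpow _ _ _ ?_ fun _ _ => hr
        simp [n, hn.ne']
    _ = ((w : ℝ≥0∞) * ∏ i, ∑ a ∈ A, (y i a : ℝ≥0∞)) ^ (n : ℝ)⁻¹ := by
        rw [ENNReal.mul_rpow_of_nonneg _ _ hr, ENNReal.prod_rpow_of_nonneg hr]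

variable {α : Type*} [DecidableEq α] {k : ℕ}

def sliceLast (S : Finset (Fin (k + 1) → α)) (a : α) : Finset (Fin k → α) :=
  (S.filter fun f => f (Fin.last k) = a).image Fin.init

theorem card_eq_sum_card_sliceLast {S : Finset (Fin (k + 1) → α)} {T : Finset α}
    (hT : ∀ f ∈ S, f (Fin.last k) ∈ T) : S.card = ∑ a ∈ T, (S.sliceLast a).card := by
  rw [card_eq_sum_card_fiberwise hT]
  refine sum_congr rfl fun a _ => (card_image_of_injOn fun f hf g hg hfg => ?_).symm
  rw [← Fin.snoc_init_self f, ← Fin.snoc_init_self g]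
  simp_all

theorem sliceLast_subset_image_init (S : Finset (Fin (k + 1) → α)) (a : α) :
    S.sliceLast a ⊆ S.image Fin.init :=
  image_subset_image (filter_subset _ _)

theorem sliceLast_nonempty {S : Finset (Fin (k + 1) → α)} {a : α}
    (ha : a ∈ S.image (· (Fin.last k))) : (S.sliceLast a).Nonempty := by
  obtain ⟨f, hf, rfl⟩ := mem_image.1 ha
  exact ⟨_, mem_image_of_mem _ (mem_filter.2 ⟨hf, rfl⟩)⟩

theorem image_comp_succAbove_sliceLast_subset (S : Finset (Fin (k + 2) → α)) (a : α)
    (j : Fin (k + 1)) :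
    (S.sliceLast a).image (· ∘ j.succAbove) ⊆
      (S.image (· ∘ j.castSucc.succAbove)).sliceLast a := by
  simp only [sliceLast, subset_iff, mem_image, mem_filter]
  rintro _ ⟨_, ⟨f, ⟨hf, rfl⟩, rfl⟩, rfl⟩
  refine ⟨_, ⟨⟨f, hf, rfl⟩, by simp [Fin.castSucc_ne_last]⟩, ?_⟩
  ext i
  simp [Fin.init]

theorem card_pow_le_prod_card_image_comp_succAbove {m : ℕ} {Z : Finset (Fin (m + 1) → α)}
    (hZ : Z.Nonempty) : Z.card ^ m ≤ ∏ j : Fin (m + 1), (Z.image (· ∘ j.succAbove)).card := by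
  induction m with
  | zero => simpa using (hZ.image (· ∘ Fin.succAbove 0)).card_pos
  | succ m ih =>
    set A : Finset α := Z.image (· (Fin.last (m + 1)))
    have hA : ∀ f ∈ Z, f (Fin.last (m + 1)) ∈ A := fun f hf => mem_image_of_mem _ hf
    have slice_bound : ∀ a ∈ A, (Z.sliceLast a).card ^ Fintype.card (Fin (m + 1)) ≤
        (Z.image Fin.init).card *
          ∏ j : Fin (m + 1), ((Z.sliceLast a).image (· ∘ j.succAbove)).card := by
      intro a ha
      rw [Fintype.card_fin, pow_succ']
      exact Nat.mul_le_mul (card_le_card (sliceLast_subset_image_init Z a))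
        (ih (sliceLast_nonempty ha))
    calc Z.card ^ (m + 1) = (∑ a ∈ A, (Z.sliceLast a).card) ^ Fintype.card (Fin (m + 1)) := by
          rw [← card_eq_sum_card_sliceLast hA, Fintype.card_fin]
      _ ≤ (Z.image Fin.init).card *
            ∏ j : Fin (m + 1), ∑ a ∈ A, ((Z.sliceLast a).image (· ∘ j.succAbove)).card :=
          sum_pow_le_mul_prod_sum A _ _ _ slice_bound
      _ ≤ (Z.image Fin.init).card *
            ∏ j : Fin (m + 1), (Z.image (· ∘ j.castSucc.succAbove)).card := by
          refine Nat.mul_le_mul_left _ (prod_le_prod' fun j _ => ?_)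
          have hA' : ∀ g ∈ Z.image (· ∘ j.castSucc.succAbove), g (Fin.last m) ∈ A := by
            simpa [Fin.castSucc_ne_last] using hA
          rw [card_eq_sum_card_sliceLast hA']
          exact sum_le_sum fun a _ => card_le_card (image_comp_succAbove_sliceLast_subset Z a j)
      _ = ∏ j : Fin (m + 2), (Z.image (· ∘ j.succAbove)).card := by
          rw [Fin.prod_univ_castSucc (n := m + 1), Fin.succAbove_last, mul_comm]
          rfl

theorem card_pow_le_card_pow_of_comp_strictMono_mem {k m : ℕ} (hk : 0 < k) (hkm : k ≤ m)
    (Z : Finset (Fin m → α)) (B : Finset (Fin k → α))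
    (hB : ∀ f ∈ Z, ∀ σ : Fin k → Fin m, StrictMono σ → f ∘ σ ∈ B) :
    Z.card ^ k ≤ B.card ^ m := by
  obtain ⟨d, rfl⟩ := Nat.exists_eq_add_of_le hkm
  induction d with
  | zero => exact Nat.pow_le_pow_left (card_le_card fun f hf => hB f hf id strictMono_id) k
  | succ d ih =>
    rcases Z.eq_empty_or_nonempty with rfl | hZ
    · simp [zero_pow hk.ne']
    have proj_bound (j : Fin (k + d + 1)) :
        (Z.image (· ∘ j.succAbove)).card ^ k ≤ B.card ^ (k + d) := by
      refine ih (by omega) _ fun g hg σ hσ => ?_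
      obtain ⟨f, hf, rfl⟩ := mem_image.1 hg
      exact hB f hf _ ((Fin.strictMono_succAbove j).comp hσ)
    refine (Nat.pow_le_pow_iff_left (n := k + d) (by omega)).1 ?_
    calc (Z.card ^ k) ^ (k + d) = (Z.card ^ (k + d)) ^ k := by rw [← pow_mul, ← pow_mul, mul_comm]
      _ ≤ (∏ j : Fin (k + d + 1), (Z.image (· ∘ j.succAbove)).card) ^ k :=
          Nat.pow_le_pow_left (card_pow_le_prod_card_image_comp_succAbove hZ) k
      _ = ∏ j : Fin (k + d + 1), (Z.image (· ∘ j.succAbove)).card ^ k := (prod_pow _ _ _).symm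
      _ ≤ ∏ _j : Fin (k + d + 1), B.card ^ (k + d) := prod_le_prod' fun j _ => proj_bound j
      _ = (B.card ^ (k + d + 1)) ^ (k + d) := by
          rw [prod_const, card_univ, Fintype.card_fin, ← pow_mul, ← pow_mul, mul_comm]

end Finset

theorem symmetry_preserving_expansion_bound_general (s t v n : ℕ)
    (hs : 0 < s)
    (Z : Finset (Fin (s + t + v) → Fin n)) :
    Z.card ^ (s + v) ≤
      (Set.ncard {w : Fin (s + v) → Fin n |
        ∃ i ∈ Z, ∃ σ : Fin (s + v) → Fin (s + t + v),
          StrictMono σ ∧ w = i ∘ σ}) ^ (s + t + v) := by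
  rw [Set.ncard_eq_toFinset_card _ (Set.toFinite _)]
  refine Finset.card_pow_le_card_pow_of_comp_strictMono_mem (Nat.add_pos_left hs v) (by omega) Z _
    fun i hi σ hσ => ?_
  simpa using ⟨i, hi, σ, hσ, rfl⟩

/-- Expansion bound for the symmetry preserving algorithm (core projection
bound): for positive s, t, v with ω = s+t+v and Z a finite set of
nondecreasing ω-tuples, |Z|^{s+v} ≤ |L_A|^ω where L_A is the set of
nondecreasing (s+v)-subsequences of elements of Z. -/
theorem symmetry_preserving_expansion_bound (s t v n : ℕ)
    (hs : 0 < s) (ht : 0 < t) (hv : 0 < v)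
    (Z : Finset (Fin (s + t + v) → Fin n)) (hZ : ∀ i ∈ Z, Monotone i) :
    Z.card ^ (s + v) ≤
      (Set.ncard {w : Fin (s + v) → Fin n |
        ∃ i ∈ Z, ∃ σ : Fin (s + v) → Fin (s + t + v),
          StrictMono σ ∧ w = i ∘ σ}) ^ (s + t + v) :=
  symmetry_preserving_expansion_bound_general s t v n hs Z
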